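/- arXiv:2109.15094 — 3 statements merged into one kernel-verified Lean document; each statement's English description precedes it below -/
import Mathlib

section
/- Consider real-valued functions x, θ : ℝ → ℝ with θ(0) = 0 that satisfy for all t ≥ 0 the differential equations ẋ(t) = −θ(t)·sgn(x(t)) and θ̇(t) = −λ θ(t) + ρ |x(t)|, where λ > 0 and ρ > 0 are constants. If ρ > λ²/4, then x converges to zero in fixed time: setting ω = √(ρ − λ²/4), for every t ≥ π/ω one has x(t) = 0; in particular the convergence time is bounded by π/√(ρ − λ²/4) independently of the initial condition x(0). -/
open Real Set

private lemma monoHelper {f f' : ℝ → ℝ} {D : Set ℝ} (hD : Convex ℝ D)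
    (hfc : ContinuousOn f D)
    (hf : ∀ t ∈ interior D, HasDerivAt f (f' t) t)
    (h0 : ∀ t ∈ interior D, 0 ≤ f' t) : MonotoneOn f D := by
  apply monotoneOn_of_deriv_nonneg hD hfc
  · exact fun t ht => ((hf t ht).differentiableAt).differentiableWithinAt
  · intro t ht
    rw [(hf t ht).deriv]
    exact h0 t ht

private lemma antiHelper {f f' : ℝ → ℝ} {D : Set ℝ} (hD : Convex ℝ D)
    (hfc : ContinuousOn f D)
    (hf : ∀ t ∈ interior D, HasDerivAt f (f' t) t)
    (h0 : ∀ t ∈ interior D, f' t ≤ 0) : AntitoneOn f D := by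
  apply antitoneOn_of_deriv_nonpos hD hfc
  · exact fun t ht => ((hf t ht).differentiableAt).differentiableWithinAt
  · intro t ht
    rw [(hf t ht).deriv]
    exact h0 t ht

/-- A positive solution of the linear system y' = -θ, θ' = -λθ+ρy with θ 0 = 0
cannot stay positive on [0, π/ω]. -/
private lemma no_pos (y th : ℝ → ℝ) (lam rho : ℝ)
    (hcond : rho > lam ^ 2 / 4)
    (hy : ∀ t ∈ Icc (0:ℝ) (π / Real.sqrt (rho - lam ^ 2 / 4)), HasDerivAt y (-(th t)) t)
    (hth : ∀ t ∈ Icc (0:ℝ) (π / Real.sqrt (rho - lam ^ 2 / 4)),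
      HasDerivAt th (-(lam * th t) + rho * y t) t)
    (hpos : ∀ t ∈ Icc (0:ℝ) (π / Real.sqrt (rho - lam ^ 2 / 4)), 0 < y t) : False := by
  set ω : ℝ := Real.sqrt (rho - lam ^ 2 / 4) with hωdef
  have hω : 0 < ω := Real.sqrt_pos.mpr (by linarith)
  have hω2 : ω ^ 2 = rho - lam ^ 2 / 4 := Real.sq_sqrt (by linarith)
  set T : ℝ := π / ω with hTdef
  have hT : 0 < T := div_pos Real.pi_pos hω
  set u : ℝ → ℝ := fun t => Real.exp (lam / 2 * t) * y t with hudef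
  set w : ℝ → ℝ := fun t => Real.exp (lam / 2 * t) * (lam / 2 * y t - th t) with hwdef
  have hexp : ∀ t : ℝ, HasDerivAt (fun t => Real.exp (lam / 2 * t))
      (Real.exp (lam / 2 * t) * (lam / 2)) t := by
    intro t
    simpa using ((hasDerivAt_id t).const_mul (lam / 2)).exp
  have hu : ∀ t ∈ Icc (0:ℝ) T, HasDerivAt u (w t) t := by
    intro t ht
    have := (hexp t).mul (hy t ht)
    refine this.congr_deriv (Eq.symm ?_)
    simp only [hwdef]
    ring
  have hw : ∀ t ∈ Icc (0:ℝ) T, HasDerivAt w (-(ω ^ 2) * u t) t := by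
    intro t ht
    have := (hexp t).mul (((hy t ht).const_mul (lam / 2)).sub (hth t ht))
    refine this.congr_deriv (Eq.symm ?_)
    simp only [hudef, Pi.sub_apply]
    rw [hω2]
    ring
  set A : ℝ → ℝ := fun t => u t * Real.cos (ω * t) - (w t / ω) * Real.sin (ω * t) with hAdef
  have hA : ∀ t ∈ Icc (0:ℝ) T, HasDerivAt A 0 t := by
    intro t ht
    have hc : HasDerivAt (fun t => Real.cos (ω * t)) (-Real.sin (ω * t) * ω) t := by
      simpa using ((hasDerivAt_id t).const_mul ω).cos
    have hs : HasDerivAt (fun t => Real.sin (ω * t)) (Real.cos (ω * t) * ω) t := by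
      simpa using ((hasDerivAt_id t).const_mul ω).sin
    have := ((hu t ht).mul hc).sub (((hw t ht).div_const ω).mul hs)
    refine this.congr_deriv (Eq.symm ?_)
    field_simp
    ring
  have hconst : A T = A 0 := by
    have := constant_of_has_deriv_right_zero
      (f := A) (a := 0) (b := T)
      (fun t ht => (hA t ht).continuousAt.continuousWithinAt)
      (fun t ht => ((hA t (Ico_subset_Icc_self ht)).hasDerivWithinAt))
    exact this T ⟨hT.le, le_rfl⟩
  have hA0 : A 0 = y 0 := by
    simp [hAdef, hudef, hwdef]
  have hAT : A T = -(u T) := by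
    have hωT : ω * T = π := by
      rw [hTdef]; field_simp
    simp [hAdef, hωT]
  have hy0 : 0 < y 0 := hpos 0 ⟨le_rfl, hT.le⟩
  have hyT : 0 < y T := hpos T ⟨hT.le, le_rfl⟩
  have huT : 0 < u T := mul_pos (Real.exp_pos _) hyT
  rw [hAT, hA0] at hconst
  linarith

private lemma sign_mul_self_eq_abs (r : ℝ) : r * Real.sign r = |r| := by
  rcases lt_trichotomy r 0 with h | h | h
  · rw [Real.sign_of_neg h, abs_of_neg h]; ring
  · simp [h]
  · rw [Real.sign_of_pos h, abs_of_pos h]; ring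

/-- Fixed-time convergence of the algorithm
    ẋ = -θ·sgn(x), θ̇ = -λθ + ρ|x|, θ(0) = 0:
    if ρ > λ²/4 then x(t) = 0 for all t ≥ π/√(ρ - λ²/4). -/
theorem fixed_time_convergence_sign_dynamics
    (x θ : ℝ → ℝ) (lam rho : ℝ)
    (hlam : 0 < lam) (hrho : 0 < rho)
    (hθ0 : θ 0 = 0)
    (hx : ∀ t : ℝ, 0 ≤ t → HasDerivAt x (-(θ t) * Real.sign (x t)) t)
    (hθ : ∀ t : ℝ, 0 ≤ t → HasDerivAt θ (-(lam * θ t) + rho * |x t|) t)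
    (hcond : rho > lam ^ 2 / 4) :
    ∀ t : ℝ, Real.pi / Real.sqrt (rho - lam ^ 2 / 4) ≤ t → x t = 0 := by
  have hω : 0 < Real.sqrt (rho - lam ^ 2 / 4) := Real.sqrt_pos.mpr (by linarith)
  set T : ℝ := π / Real.sqrt (rho - lam ^ 2 / 4) with hTdef
  have hT : 0 < T := div_pos Real.pi_pos hω
  have hxc : ContinuousOn x (Ici 0) :=
    fun t ht => (hx t ht).continuousAt.continuousWithinAt
  -- the auxiliary function θ(t)·e^{λt} is monotone on [0,∞)
  have hg : MonotoneOn (fun t => θ t * Real.exp (lam * t)) (Ici 0) := by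
    apply monoHelper (f' := fun t => rho * |x t| * Real.exp (lam * t)) (convex_Ici 0)
    · exact fun t ht =>
        (((hθ t ht).mul (by simpa using ((hasDerivAt_id t).const_mul lam).exp))).continuousAt.continuousWithinAt
    · intro t ht
      rw [interior_Ici] at ht
      have := (hθ t (le_of_lt ht)).mul
        (by simpa using ((hasDerivAt_id t).const_mul lam).exp :
          HasDerivAt (fun t => Real.exp (lam * t)) (Real.exp (lam * t) * lam) t)
      refine this.congr_deriv (Eq.symm ?_)
      ring
    · intro t _
      positivity
  -- θ is nonnegative on [0,∞)
  have hθnn : ∀ t : ℝ, 0 ≤ t → 0 ≤ θ t := by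
    intro t ht
    have := hg (self_mem_Ici) (mem_Ici.mpr ht) ht
    simp only [hθ0, zero_mul] at this
    nlinarith [Real.exp_pos (lam * t)]
  -- x has a zero in [0, T]
  have hzero : ∃ s ∈ Icc (0:ℝ) T, x s = 0 := by
    by_contra h
    push_neg at h
    rcases (h 0 ⟨le_rfl, hT.le⟩).lt_or_gt with h0 | h0
    · -- x 0 < 0
      have hneg : ∀ t ∈ Icc (0:ℝ) T, x t < 0 := by
        intro t ht
        rcases lt_trichotomy (x t) 0 with h1 | h1 | h1
        · exact h1
        · exact absurd h1 (h t ht)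
        · obtain ⟨c, hc, hc0⟩ := intermediate_value_Icc ht.1
            (hxc.mono (fun r hr => hr.1)) (⟨h0.le, h1.le⟩ : (0:ℝ) ∈ Icc (x 0) (x t))
          exact absurd hc0 (h c ⟨hc.1, le_trans hc.2 ht.2⟩)
      refine no_pos (fun t => -(x t)) θ lam rho hcond ?_ ?_ ?_
      · intro t ht
        have := (hx t ht.1).neg
        rw [Real.sign_of_neg (hneg t ht)] at this
        refine this.congr_deriv (Eq.symm ?_)
        ring
      · intro t ht
        have habs : |x t| = -(x t) := abs_of_neg (hneg t ht)
        show HasDerivAt θ (-(lam * θ t) + rho * (-(x t))) t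
        rw [← habs]
        exact hθ t ht.1
      · intro t ht
        show (0:ℝ) < -(x t)
        linarith [hneg t ht]
    · -- 0 < x 0
      have hpos : ∀ t ∈ Icc (0:ℝ) T, 0 < x t := by
        intro t ht
        rcases lt_trichotomy (x t) 0 with h1 | h1 | h1
        · obtain ⟨c, hc, hc0⟩ := intermediate_value_Icc' ht.1
            (hxc.mono (fun r hr => hr.1)) (⟨h1.le, h0.le⟩ : (0:ℝ) ∈ Icc (x t) (x 0))
          exact absurd hc0 (h c ⟨hc.1, le_trans hc.2 ht.2⟩)
        · exact absurd h1 (h t ht)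
        · exact h1
      refine no_pos x θ lam rho hcond ?_ ?_ ?_
      · intro t ht
        have := hx t ht.1
        rw [Real.sign_of_pos (hpos t ht)] at this
        convert this using 1
        ring
      · intro t ht
        have habs : |x t| = x t := abs_of_pos (hpos t ht)
        rw [← habs]
        exact hθ t ht.1
      · exact hpos
  obtain ⟨s, hs, hxs⟩ := hzero
  intro t htT
  have hst : s ≤ t := le_trans hs.2 htT
  have ht0 : (0:ℝ) ≤ t := le_trans hs.1 hst
  rcases (hθnn s hs.1).eq_or_lt with hθs | hθs
  · -- θ s = 0 : Lyapunov function V = θ² + ρx² is zero at s and decreasing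
    have hV : AntitoneOn (fun r => θ r ^ 2 + rho * x r ^ 2) (Ici s) := by
      apply antiHelper (f' := fun r => -(2 * lam * θ r ^ 2)) (convex_Ici s)
      · intro r hr
        have hr0 : (0:ℝ) ≤ r := le_trans hs.1 hr
        exact (((hθ r hr0).pow 2).add (((hx r hr0).pow 2).const_mul rho)).continuousAt.continuousWithinAt
      · intro r hr
        rw [interior_Ici] at hr
        have hr0 : (0:ℝ) ≤ r := le_trans hs.1 (le_of_lt hr)
        have := ((hθ r hr0).pow 2).add (((hx r hr0).pow 2).const_mul rho)
        refine this.congr_deriv (Eq.symm ?_)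
        have hsgn := sign_mul_self_eq_abs (x r)
        push_cast
        linear_combination (2 * rho * θ r) * hsgn
      · intro r _
        nlinarith [sq_nonneg (θ r), hlam]
    have hVle := hV (mem_Ici.mpr (le_refl s)) (mem_Ici.mpr hst) hst
    simp only [hxs, ← hθs] at hVle
    have hx2 : x t ^ 2 ≤ 0 := by nlinarith [sq_nonneg (θ t)]
    have := le_antisymm hx2 (sq_nonneg (x t))
    exact (pow_eq_zero_iff (by norm_num : (2:ℕ) ≠ 0)).mp this
  · -- 0 < θ s : θ stays positive, and x cannot leave 0
    have hθpos : ∀ r : ℝ, s ≤ r → 0 < θ r := by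
      intro r hr
      have hr0 : (0:ℝ) ≤ r := le_trans hs.1 hr
      have hmono : θ s * Real.exp (lam * s) ≤ θ r * Real.exp (lam * r) :=
        hg (mem_Ici.mpr hs.1) (mem_Ici.mpr hr0) hr
      have h1 : 0 < θ s * Real.exp (lam * s) := mul_pos hθs (Real.exp_pos _)
      nlinarith [Real.exp_pos (lam * r)]
    by_contra hne
    have hScl : IsClosed (Icc s t ∩ x ⁻¹' {0}) :=
      (hxc.mono (fun r hr => le_trans hs.1 hr.1)).preimage_isClosed_of_isClosed
        isClosed_Icc isClosed_singleton
    have hSne : (Icc s t ∩ x ⁻¹' {0}).Nonempty := ⟨s, ⟨le_rfl, hst⟩, Set.mem_singleton_iff.mpr hxs⟩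
    have hSbdd : BddAbove (Icc s t ∩ x ⁻¹' {0}) := ⟨t, fun r hr => hr.1.2⟩
    obtain ⟨s1, hs1, hs1max⟩ :
        ∃ s1, s1 ∈ Icc s t ∩ x ⁻¹' {0} ∧ ∀ r ∈ Icc s t ∩ x ⁻¹' {0}, r ≤ s1 :=
      ⟨_, hScl.csSup_mem hSne hSbdd, fun r hr => le_csSup hSbdd hr⟩
    have hxs1 : x s1 = 0 := hs1.2
    have hss1 : s ≤ s1 := hs1.1.1
    have hs1t : s1 ≤ t := hs1.1.2
    have hs1lt : s1 < t := lt_of_le_of_ne hs1t (by rintro rfl; exact hne hxs1)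
    have hnz : ∀ r ∈ Ioc s1 t, x r ≠ 0 := by
      intro r hr h0
      have hrS : r ∈ Icc s t ∩ x ⁻¹' {0} :=
        ⟨⟨le_trans hss1 hr.1.le, hr.2⟩, Set.mem_singleton_iff.mpr h0⟩
      exact absurd (hs1max r hrS) (not_le.mpr hr.1)
    have hxcont : ContinuousOn x (Icc s1 t) :=
      hxc.mono (fun r hr => le_trans (le_trans hs.1 hss1) hr.1)
    rcases lt_or_gt_of_ne hne with hxt | hxt
    · -- x t < 0 : x is monotone increasing on [s1, t], contradiction
      have hsgn : ∀ r ∈ Ioc s1 t, x r < 0 := by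
        intro r hr
        rcases lt_trichotomy (x r) 0 with h1 | h1 | h1
        · exact h1
        · exact absurd h1 (hnz r hr)
        · obtain ⟨c, hc, hc0⟩ := intermediate_value_Icc' hr.2
            (hxcont.mono (Icc_subset_Icc hr.1.le le_rfl))
            (⟨hxt.le, h1.le⟩ : (0:ℝ) ∈ Icc (x t) (x r))
          exact absurd hc0 (hnz c ⟨lt_of_lt_of_le hr.1 hc.1, hc.2⟩)
      have hmono : MonotoneOn x (Icc s1 t) := by
        apply monoHelper (f' := fun r => θ r) (convex_Icc s1 t) hxcont
        · intro r hr
          rw [interior_Icc] at hr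
          have hr0 : (0:ℝ) ≤ r := le_trans (le_trans hs.1 hss1) hr.1.le
          have := hx r hr0
          rw [Real.sign_of_neg (hsgn r ⟨hr.1, hr.2.le⟩)] at this
          convert this using 1
          ring
        · intro r hr
          rw [interior_Icc] at hr
          exact (hθpos r (le_trans hss1 hr.1.le)).le
      have := hmono (⟨le_rfl, hs1t⟩ : s1 ∈ Icc s1 t) (⟨hs1t, le_rfl⟩ : t ∈ Icc s1 t) hs1t
      rw [hxs1] at this
      linarith
    · -- 0 < x t : x is monotone decreasing on [s1, t], contradiction
      have hsgn : ∀ r ∈ Ioc s1 t, 0 < x r := by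
        intro r hr
        rcases lt_trichotomy (x r) 0 with h1 | h1 | h1
        · obtain ⟨c, hc, hc0⟩ := intermediate_value_Icc hr.2
            (hxcont.mono (Icc_subset_Icc hr.1.le le_rfl))
            (⟨h1.le, hxt.le⟩ : (0:ℝ) ∈ Icc (x r) (x t))
          exact absurd hc0 (hnz c ⟨lt_of_lt_of_le hr.1 hc.1, hc.2⟩)
        · exact absurd h1 (hnz r hr)
        · exact h1
      have hanti : AntitoneOn x (Icc s1 t) := by
        apply antiHelper (f' := fun r => -(θ r)) (convex_Icc s1 t) hxcont
        · intro r hr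
          rw [interior_Icc] at hr
          have hr0 : (0:ℝ) ≤ r := le_trans (le_trans hs.1 hss1) hr.1.le
          have := hx r hr0
          rw [Real.sign_of_pos (hsgn r ⟨hr.1, hr.2.le⟩)] at this
          convert this using 1
          ring
        · intro r hr
          rw [interior_Icc] at hr
          linarith [hθpos r (le_trans hss1 hr.1.le)]
      have := hanti (⟨le_rfl, hs1t⟩ : s1 ∈ Icc s1 t) (⟨hs1t, le_rfl⟩ : t ∈ Icc s1 t) hs1t
      rw [hxs1] at this
      linarith
end

section
/- Consider real-valued differentiable functions x, θ : ℝ → ℝ with θ(0) = 0, x(t) ≥ 0 for all t ≥ 0, and θ(t) ≥ 0 for all t ≥ 0, satisfying for all t ≥ 0 the differential inequalities ẋ(t) ≤ −θ(t) and θ̇(t) ≥ −λ θ(t) + ρ x(t), where λ > 0 and ρ > 0 are constants. If ρ > λ²/4, then x converges to zero in fixed time: setting ω = √(ρ − λ²/4), for every t ≥ π/ω one has x(t) = 0. -/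
/-- Fixed-time convergence for the differential inequalities
    ẋ ≤ -θ, θ̇ ≥ -λθ + ρx with x ≥ 0, θ ≥ 0, θ(0) = 0:
    if ρ > λ²/4 then x(t) = 0 for all t ≥ π/√(ρ - λ²/4). -/
theorem fixed_time_convergence_differential_inequalities
    (x θ : ℝ → ℝ) (lam rho : ℝ)
    (hlam : 0 < lam) (hrho : 0 < rho)
    (hθ0 : θ 0 = 0)
    (hxnn : ∀ t : ℝ, 0 ≤ t → 0 ≤ x t)
    (hθnn : ∀ t : ℝ, 0 ≤ t → 0 ≤ θ t)
    (hxdiff : Differentiable ℝ x)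
    (hθdiff : Differentiable ℝ θ)
    (hx : ∀ t : ℝ, 0 ≤ t → deriv x t ≤ -(θ t))
    (hθ : ∀ t : ℝ, 0 ≤ t → -(lam * θ t) + rho * x t ≤ deriv θ t)
    (hcond : rho > lam ^ 2 / 4) :
    ∀ t : ℝ, Real.pi / Real.sqrt (rho - lam ^ 2 / 4) ≤ t → x t = 0 := by
  intro t0 ht0
  set ω := Real.sqrt (rho - lam ^ 2 / 4) with hωdef
  have hsub : (0:ℝ) < rho - lam ^ 2 / 4 := by linarith
  have hωpos : 0 < ω := Real.sqrt_pos.mpr hsub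
  have hω2 : ω ^ 2 = rho - lam ^ 2 / 4 := Real.sq_sqrt hsub.le
  have ht0pos : 0 < t0 := lt_of_lt_of_le (div_pos Real.pi_pos hωpos) ht0
  by_contra hne
  have hxt0 : 0 < x t0 := lt_of_le_of_ne (hxnn t0 ht0pos.le) (Ne.symm hne)
  -- x is nonincreasing on [0, t0]
  have hanti : AntitoneOn x (Set.Icc 0 t0) := by
    apply antitoneOn_of_deriv_nonpos (convex_Icc 0 t0)
      hxdiff.continuous.continuousOn hxdiff.differentiableOn
    intro t ht
    rw [interior_Icc] at ht
    have := hx t ht.1.le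
    have := hθnn t ht.1.le
    linarith
  have hxpos : ∀ t ∈ Set.Icc (0:ℝ) t0, 0 < x t := by
    intro t ht
    exact lt_of_lt_of_le hxt0 (hanti ht (Set.right_mem_Icc.mpr ht0pos.le) ht.2)
  -- the angle function
  set φ : ℝ → ℝ := fun t => Real.arctan ((θ t / x t - lam / 2) / ω) with hφdef
  have hD : ∀ t ∈ Set.Icc (0:ℝ) t0,
      HasDerivAt φ (1 / (1 + ((θ t / x t - lam / 2) / ω) ^ 2) *
        ((deriv θ t * x t - θ t * deriv x t) / x t ^ 2 / ω)) t := by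
    intro t ht
    have hbne : x t ≠ 0 := (hxpos t ht).ne'
    have h1 : HasDerivAt (fun s => θ s / x s)
        ((deriv θ t * x t - θ t * deriv x t) / (x t) ^ 2) t :=
      ((hθdiff t).hasDerivAt).div ((hxdiff t).hasDerivAt) hbne
    have h2 := ((h1.sub_const (lam / 2)).div_const ω).arctan
    exact h2
  have hDge : ∀ t ∈ Set.Icc (0:ℝ) t0,
      ω ≤ 1 / (1 + ((θ t / x t - lam / 2) / ω) ^ 2) *
        ((deriv θ t * x t - θ t * deriv x t) / x t ^ 2 / ω) := by
    intro t ht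
    have hb : 0 < x t := hxpos t ht
    have ha : 0 ≤ θ t := hθnn t ht.1
    have h1 : -(lam * θ t) + rho * x t ≤ deriv θ t := hθ t ht.1
    have h2 : deriv x t ≤ -(θ t) := hx t ht.1
    have hN : rho * (x t) ^ 2 - lam * θ t * x t + (θ t) ^ 2
        ≤ deriv θ t * x t - θ t * deriv x t := by
      nlinarith [mul_le_mul_of_nonneg_right h1 hb.le,
        mul_le_mul_of_nonneg_left h2 ha]
    have hden : 0 < 1 + ((θ t / x t - lam / 2) / ω) ^ 2 := by positivity
    have hrwd : 1 / (1 + ((θ t / x t - lam / 2) / ω) ^ 2) *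
        ((deriv θ t * x t - θ t * deriv x t) / x t ^ 2 / ω)
        = ((deriv θ t * x t - θ t * deriv x t) / x t ^ 2 / ω) /
          (1 + ((θ t / x t - lam / 2) / ω) ^ 2) := by ring
    rw [hrwd, le_div_iff₀ hden, div_div, le_div_iff₀ (by positivity)]
    have hc : (θ t / x t - lam / 2) ^ 2 * x t ^ 2 = (θ t - lam / 2 * x t) ^ 2 := by
      field_simp
    have key : (ω ^ 2 + (θ t / x t - lam / 2) ^ 2) * x t ^ 2
        ≤ deriv θ t * x t - θ t * deriv x t := by nlinarith [hN, hc, hω2]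
    have hexp : ω * (1 + ((θ t / x t - lam / 2) / ω) ^ 2) * (x t ^ 2 * ω)
        = (ω ^ 2 + (θ t / x t - lam / 2) ^ 2) * x t ^ 2 := by
      field_simp
    rw [hexp]
    exact key
  -- mean value inequality
  have hcont : ContinuousOn φ (Set.Icc 0 t0) := fun t ht =>
    ((hD t ht).continuousAt).continuousWithinAt
  have hdiff : DifferentiableOn ℝ φ (interior (Set.Icc 0 t0)) := by
    rw [interior_Icc]
    intro t ht
    exact ((hD t (Set.mem_Icc_of_Ioo ht)).differentiableAt).differentiableWithinAt
  have hderiv_ge : ∀ t ∈ interior (Set.Icc 0 t0), ω ≤ deriv φ t := by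
    rw [interior_Icc]
    intro t ht
    have ht' := Set.mem_Icc_of_Ioo ht
    rw [(hD t ht').deriv]
    exact hDge t ht'
  have hmvt := (convex_Icc (0:ℝ) t0).mul_sub_le_image_sub_of_le_deriv hcont hdiff
    hderiv_ge 0 (Set.left_mem_Icc.mpr ht0pos.le) t0
    (Set.right_mem_Icc.mpr ht0pos.le) ht0pos.le
  -- bounds on φ
  have hφ0 : -(Real.pi / 2) < φ 0 := Real.neg_pi_div_two_lt_arctan _
  have hφt0 : φ t0 < Real.pi / 2 := Real.arctan_lt_pi_div_two _
  have hπ : Real.pi ≤ ω * t0 := by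
    rw [div_le_iff₀ hωpos] at ht0
    linarith [ht0]
  linarith [hmvt]
end

section
/- Consider real-valued differentiable functions s_i, η_i : ℝ → ℝ (i = 1,…,n) with η_i(0) = 0, constants ω > 0, μ > 0, d ≥ 0, and measurable disturbances Δ_i : ℝ → ℝ with |Δ_i(t)| ≤ d for all t ≥ 0, satisfying for all t ≥ 0 the sliding-mode reaching dynamics ṡ_i(t) = −(η_i(t) + d)·sgn(s_i(t)) + Δ_i(t) and η̇_i(t) = −ω η_i(t) + μ |s_i(t)|. If μ > ω²/4, then all sliding variables reach zero in fixed time: for every t ≥ π/√(μ − ω²/4) and all i, s_i(t) = 0. -/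
/-- Auxiliary one-sided lemma: under the reaching dynamics, `s t₁ ≤ 0` for
`t₁ ≥ π / √(μ - ω²/4)`. -/
lemma aux_reach (s η Δ : ℝ → ℝ) (om mu d : ℝ)
    (hom : 0 < om) (hmu : 0 < mu) (hd : 0 ≤ d)
    (hη0 : η 0 = 0)
    (hΔ : ∀ t : ℝ, 0 ≤ t → |Δ t| ≤ d)
    (hs : ∀ t : ℝ, 0 ≤ t →
      HasDerivAt s (-((η t + d) * Real.sign (s t)) + Δ t) t)
    (hη : ∀ t : ℝ, 0 ≤ t →
      HasDerivAt η (-(om * η t) + mu * |s t|) t)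
    (hcond : mu > om ^ 2 / 4)
    (t₁ : ℝ) (ht₁ : Real.pi / Real.sqrt (mu - om ^ 2 / 4) ≤ t₁) :
    s t₁ ≤ 0 := by
  by_contra hcon
  push_neg at hcon
  set Ω := Real.sqrt (mu - om ^ 2 / 4) with hΩdef
  have hΩpos : 0 < Ω := Real.sqrt_pos.mpr (by linarith)
  have hΩ2 : Ω ^ 2 = mu - om ^ 2 / 4 := Real.sq_sqrt (by linarith)
  have ht₁pos : 0 < t₁ := lt_of_lt_of_le (div_pos Real.pi_pos hΩpos) ht₁
  -- Step 1: η is nonnegative on [0, ∞)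
  have hηnn : ∀ t : ℝ, 0 ≤ t → 0 ≤ η t := by
    intro t ht
    rcases eq_or_lt_of_le ht with h | h
    · simp [← h, hη0]
    have hF : ∀ x ∈ Set.Icc (0:ℝ) t, HasDerivAt (fun y => η y * Real.exp (om * y))
        ((mu * |s x|) * Real.exp (om * x)) x := by
      intro x hx
      have hexp : HasDerivAt (fun y : ℝ => Real.exp (om * y))
          (Real.exp (om * x) * (om * 1)) x :=
        ((hasDerivAt_id x).const_mul om).exp
      have h2 := (hη x hx.1).mul hexp
      exact h2.congr_deriv (by ring)
    have hmono : MonotoneOn (fun y => η y * Real.exp (om * y)) (Set.Icc 0 t) := by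
      apply monotoneOn_of_deriv_nonneg (convex_Icc 0 t)
      · exact fun x hx => (hF x hx).continuousAt.continuousWithinAt
      · intro x hx
        rw [interior_Icc] at hx
        exact (hF x ⟨le_of_lt hx.1, le_of_lt hx.2⟩).differentiableAt.differentiableWithinAt
      · intro x hx
        rw [interior_Icc] at hx
        rw [(hF x ⟨le_of_lt hx.1, le_of_lt hx.2⟩).deriv]
        positivity
    have key := hmono (Set.left_mem_Icc.mpr ht) (Set.right_mem_Icc.mpr ht) ht
    simp only [hη0, zero_mul] at key
    nlinarith [Real.exp_pos (om * t), key]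
  -- Step 2: s is positive on [0, t₁]
  have hspos : ∀ t ∈ Set.Icc (0:ℝ) t₁, 0 < s t := by
    by_contra hc
    push_neg at hc
    obtain ⟨t₀, ht₀, ht₀le⟩ := hc
    set A := Set.Icc (0:ℝ) t₁ ∩ s ⁻¹' Set.Iic 0 with hA
    have hne : A.Nonempty := ⟨t₀, ht₀, ht₀le⟩
    have hbdd : BddAbove A := ⟨t₁, fun x hx => hx.1.2⟩
    have hscont : ContinuousOn s (Set.Icc (0:ℝ) t₁) :=
      fun x hx => (hs x hx.1).continuousAt.continuousWithinAt
    have hclosed : IsClosed A :=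
      hscont.preimage_isClosed_of_isClosed isClosed_Icc isClosed_Iic
    set c := sSup A with hc
    have hcA : c ∈ A := hclosed.csSup_mem hne hbdd
    have hsc : s c ≤ 0 := hcA.2
    have hcmem : c ∈ Set.Icc (0:ℝ) t₁ := hcA.1
    have hct₁ : c < t₁ := lt_of_le_of_ne hcmem.2 (fun h => by rw [h] at hsc; linarith)
    have hpos_after : ∀ x ∈ Set.Ioc c t₁, 0 < s x := by
      intro x hx
      by_contra h
      push_neg at h
      have hxA : x ∈ A := ⟨⟨le_trans hcmem.1 (le_of_lt hx.1), hx.2⟩, h⟩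
      exact absurd (le_csSup hbdd hxA) (not_le.mpr hx.1)
    have hanti : AntitoneOn s (Set.Icc c t₁) := by
      apply antitoneOn_of_deriv_nonpos (convex_Icc c t₁)
      · exact fun x hx => (hs x (le_trans hcmem.1 hx.1)).continuousAt.continuousWithinAt
      · intro x hx
        rw [interior_Icc] at hx
        exact (hs x (le_trans hcmem.1 (le_of_lt hx.1))).differentiableAt.differentiableWithinAt
      · intro x hx
        rw [interior_Icc] at hx
        have hx0 : (0:ℝ) ≤ x := le_trans hcmem.1 (le_of_lt hx.1)
        have hsx : 0 < s x := hpos_after x ⟨hx.1, le_of_lt hx.2⟩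
        rw [(hs x hx0).deriv, Real.sign_of_pos hsx, mul_one]
        have h1 : Δ x ≤ d := (abs_le.mp (hΔ x hx0)).2
        have h2 : 0 ≤ η x := hηnn x hx0
        linarith
    have := hanti (Set.left_mem_Icc.mpr (le_of_lt hct₁))
      (Set.right_mem_Icc.mpr (le_of_lt hct₁)) (le_of_lt hct₁)
    linarith
  -- Step 3: the rotating-phase function
  set q : ℝ → ℝ := fun t => η t - om / 2 * s t with hqdef
  set f : ℝ → ℝ := fun t => Real.arctan (q t / (Ω * s t)) - Ω * t with hfdef
  have hderiv : ∀ t ∈ Set.Icc (0:ℝ) t₁, ∃ v, HasDerivAt f v t ∧ 0 ≤ v := by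
    intro t ht
    have hP : 0 < s t := hspos t ht
    have hE : 0 ≤ η t := hηnn t ht.1
    have hg : Δ t ≤ d := (abs_le.mp (hΔ t ht.1)).2
    have hs' : HasDerivAt s (-(η t + d) + Δ t) t := by
      have h := hs t ht.1
      rwa [Real.sign_of_pos hP, mul_one] at h
    have hq' : HasDerivAt q
        ((-(om * η t) + mu * s t) - om / 2 * (-(η t + d) + Δ t)) t := by
      have h := (hη t ht.1).sub (hs'.const_mul (om / 2))
      rwa [abs_of_pos hP] at h
    have hden : Ω * s t ≠ 0 := ne_of_gt (mul_pos hΩpos hP)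
    have hu : HasDerivAt (fun y => q y / (Ω * s y))
        ((((-(om * η t) + mu * s t) - om / 2 * (-(η t + d) + Δ t)) * (Ω * s t)
          - q t * (Ω * (-(η t + d) + Δ t))) / (Ω * s t) ^ 2) t :=
      hq'.div (hs'.const_mul Ω) hden
    have harc := (Real.hasDerivAt_arctan (q t / (Ω * s t))).comp t hu
    have hlin : HasDerivAt (fun y : ℝ => Ω * y) (Ω * 1) t := (hasDerivAt_id t).const_mul Ω
    refine ⟨_, harc.sub hlin, ?_⟩
    -- the derivative is nonnegative
    set P := s t
    set E := η t
    set p' := -(E + d) + Δ t with hp'def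
    set q' := (-(om * E) + mu * P) - om / 2 * p' with hq'def
    have hQ : q t = E - om / 2 * P := rfl
    set D := Ω ^ 2 * P ^ 2 + (q t) ^ 2 with hDdef
    have hDpos : 0 < D := by
      have : 0 < Ω ^ 2 * P ^ 2 := by positivity
      nlinarith [sq_nonneg (q t)]
    have hval : 1 / (1 + (q t / (Ω * P)) ^ 2) *
        ((q' * (Ω * P) - q t * (Ω * p')) / (Ω * P) ^ 2)
        = Ω * ((q' * P - q t * p') / D) := by
      have h1 : (Ω * P) ≠ 0 := hden
      have h2 : (1 + (q t / (Ω * P)) ^ 2) ≠ 0 := by positivity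
      field_simp
      ring
    have hN : q' * P - q t * p' = D + (d - Δ t) * E := by
      rw [hq'def, hp'def, hDdef, hQ, hΩ2]; ring
    have hge : Ω * 1 ≤ 1 / (1 + (q t / (Ω * P)) ^ 2) *
        ((q' * (Ω * P) - q t * (Ω * p')) / (Ω * P) ^ 2) := by
      rw [hval, mul_one]
      have h3 : (1:ℝ) ≤ (q' * P - q t * p') / D := by
        rw [le_div_iff₀ hDpos, one_mul, hN]
        nlinarith
      calc Ω = Ω * 1 := (mul_one Ω).symm
        _ ≤ Ω * ((q' * P - q t * p') / D) :=
            mul_le_mul_of_nonneg_left h3 (le_of_lt hΩpos)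
    linarith
  -- Step 4: f is monotone on [0, t₁], yielding a contradiction
  have hmono : MonotoneOn f (Set.Icc 0 t₁) := by
    apply monotoneOn_of_deriv_nonneg (convex_Icc 0 t₁)
    · intro x hx
      obtain ⟨v, hv, _⟩ := hderiv x hx
      exact hv.continuousAt.continuousWithinAt
    · intro x hx
      rw [interior_Icc] at hx
      obtain ⟨v, hv, _⟩ := hderiv x ⟨le_of_lt hx.1, le_of_lt hx.2⟩
      exact hv.differentiableAt.differentiableWithinAt
    · intro x hx
      rw [interior_Icc] at hx
      obtain ⟨v, hv, hv0⟩ := hderiv x ⟨le_of_lt hx.1, le_of_lt hx.2⟩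
      rw [hv.deriv]; exact hv0
  have hkey := hmono (Set.left_mem_Icc.mpr (le_of_lt ht₁pos))
    (Set.right_mem_Icc.mpr (le_of_lt ht₁pos)) (le_of_lt ht₁pos)
  have hπ : Real.pi ≤ Ω * t₁ := by
    rw [div_le_iff₀ hΩpos] at ht₁
    linarith [ht₁]
  have h1 := Real.arctan_lt_pi_div_two (q t₁ / (Ω * s t₁))
  have h2 := Real.neg_pi_div_two_lt_arctan (q 0 / (Ω * s 0))
  simp only [hfdef, mul_zero, sub_zero] at hkey
  linarith

/-- Fixed-time reaching of the sliding manifold: with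
    ṡᵢ = -(ηᵢ + d)·sgn(sᵢ) + Δᵢ, η̇ᵢ = -ωηᵢ + μ|sᵢ|, ηᵢ(0) = 0, |Δᵢ| ≤ d,
    if μ > ω²/4 then sᵢ(t) = 0 for every t ≥ π/√(μ - ω²/4) and all i. -/
theorem fixed_time_sliding_mode_reaching
    (n : ℕ) (s η Δ : Fin n → ℝ → ℝ) (om mu d : ℝ)
    (hom : 0 < om) (hmu : 0 < mu) (hd : 0 ≤ d)
    (hη0 : ∀ i, η i 0 = 0)
    (hΔmeas : ∀ i, Measurable (Δ i))
    (hΔ : ∀ i, ∀ t : ℝ, 0 ≤ t → |Δ i t| ≤ d)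
    (hs : ∀ i, ∀ t : ℝ, 0 ≤ t →
      HasDerivAt (s i) (-((η i t + d) * Real.sign (s i t)) + Δ i t) t)
    (hη : ∀ i, ∀ t : ℝ, 0 ≤ t →
      HasDerivAt (η i) (-(om * η i t) + mu * |s i t|) t)
    (hcond : mu > om ^ 2 / 4) :
    ∀ t : ℝ, Real.pi / Real.sqrt (mu - om ^ 2 / 4) ≤ t → ∀ i, s i t = 0 := by
  intro t ht i
  have hle : s i t ≤ 0 :=
    aux_reach (s i) (η i) (Δ i) om mu d hom hmu hd (hη0 i) (hΔ i) (hs i) (hη i) hcond t ht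
  have hge : -(s i t) ≤ 0 := by
    apply aux_reach (fun u => -(s i u)) (η i) (fun u => -(Δ i u)) om mu d hom hmu hd
      (hη0 i) _ _ _ hcond t ht
    · intro u hu
      rw [abs_neg]; exact hΔ i u hu
    · intro u hu
      have h := (hs i u hu).neg
      exact h.congr_deriv (by rw [Real.sign_neg]; ring)
    · intro u hu
      have h := hη i u hu
      simpa [abs_neg] using h
  linarith
end
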